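/- arXiv:2206.10444 — 2 statements merged into one kernel-verified Lean document; each statement's English description precedes it below -/
import Mathlib

section
/- Let A ∈ ℝ^{n×n} with A + Aᵀ positive definite, ‖A‖₂ = ‖U‖₂ = 1, P_α = (1/(2α))(A + αI)(αI + γUUᵀ). If (λ, x) is a real eigenpair of P_α^{-1}(A + γUUᵀ) with ‖x‖₂ = 1, then λ ∈ [μ, 2) where μ = α·λ_min(A + Aᵀ)/((1 + α)(α + γ)). -/
/-!
Write `C = UUᵀ`, `w = (αI + γC)x` and `u = (αI - γC)x`. Since
`(A + αI)(αI + γC) - (αI - A)(αI - γC) = 2α(A + γC)`, the eigen-equation `(A + γC)x = λ P_α x`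
becomes `(αI - A)u = (1 - λ)(A + αI)w`. As `C ⪰ 0` we have `‖u‖ ≤ ‖w‖`, and as `A + Aᵀ ≻ 0` the
Cayley transform `(αI - A)(αI + A)⁻¹` is a strict contraction, so `|1 - λ| < 1`, i.e. `0 < λ < 2`.
For the lower bound, `xᵀ(A + γC)x ≥ xᵀAx ≥ λ_min(A + Aᵀ)/2`, while
`xᵀP_α x ≤ ‖P_α‖ ≤ (1 + α)(α + γ)/(2α)`.
-/

open Matrix

/-- The spectral (operator 2-) norm of a real (possibly rectangular) matrix. -/
noncomputable def spec2Norm {m n : ℕ} (M : Matrix (Fin m) (Fin n) ℝ) : ℝ :=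
  ‖LinearMap.toContinuousLinearMap (Matrix.toEuclideanLin M)‖

open scoped Matrix.Norms.L2Operator

namespace Matrix
variable {n : Type*} [Fintype n] [DecidableEq n]

theorem IsHermitian.iInf_eigenvalues_mul_dotProduct_self_le {H : Matrix n n ℝ}
    (hH : H.IsHermitian) (x : n → ℝ) :
    (⨅ i, hH.eigenvalues i) * (x ⬝ᵥ x) ≤ x ⬝ᵥ (H *ᵥ x) := by
  set c := ⨅ i, hH.eigenvalues i
  have hpsd : (H - algebraMap ℝ _ c).PosSemidef := by
    rw [posSemidef_iff_isHermitian_and_spectrum_nonneg]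
    refine ⟨hH.sub (IsSelfAdjoint.algebraMap _ (IsSelfAdjoint.all c)), ?_⟩
    rw [← spectrum.sub_singleton_eq, hH.spectrum_real_eq_range_eigenvalues]
    rintro _ ⟨_, ⟨i, rfl⟩, _, rfl, rfl⟩
    exact sub_nonneg.2 (ciInf_le (Set.finite_range hH.eigenvalues).bddBelow i)
  simpa [Algebra.algebraMap_eq_smul_one, sub_mulVec, smul_mulVec, dotProduct_smul, sub_nonneg]
    using hpsd.dotProduct_mulVec_nonneg x

theorem l2_opNorm_one_le : ‖(1 : Matrix n n ℝ)‖ ≤ 1 := by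
  rw [← diagonal_one, l2_opNorm_diagonal]
  exact (pi_norm_le_iff_of_nonneg zero_le_one).2 fun _ => by simp

theorem l2_opNorm_mul_transpose_self {m : Type*} [Fintype m] [DecidableEq m] (U : Matrix n m ℝ) :
    ‖U * Uᵀ‖ = ‖U‖ * ‖U‖ := by
  have h := l2_opNorm_conjTranspose U
  rw [conjTranspose_eq_transpose_of_trivial] at h
  simpa [h] using l2_opNorm_conjTranspose_mul_self Uᴴ

omit [DecidableEq n] in
theorem norm_toLp_sq_eq_dotProduct (x : n → ℝ) : ‖WithLp.toLp 2 x‖ ^ 2 = x ⬝ᵥ x := by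
  rw [← real_inner_self_eq_norm_sq, EuclideanSpace.inner_toLp_toLp]; rfl

theorem dotProduct_mulVec_le_l2_opNorm_mul (M : Matrix n n ℝ) (x : n → ℝ) :
    x ⬝ᵥ (M *ᵥ x) ≤ ‖M‖ * (x ⬝ᵥ x) := by
  have h := real_inner_le_norm (WithLp.toLp 2 x) (WithLp.toLp 2 (M *ᵥ x))
  have h2 := l2_opNorm_mulVec M (WithLp.toLp 2 x)
  rw [EuclideanSpace.inner_toLp_toLp, star_trivial, dotProduct_comm] at h
  rw [← norm_toLp_sq_eq_dotProduct, sq]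
  calc _ ≤ _ := h
    _ ≤ _ := mul_le_mul_of_nonneg_left h2 (norm_nonneg _)
    _ = _ := by ring

theorem isUnit_of_dotProduct_mulVec_pos {M : Matrix n n ℝ}
    (hM : ∀ z ≠ 0, 0 < z ⬝ᵥ (M *ᵥ z)) : IsUnit M := by
  refine mulVec_injective_iff_isUnit.1 fun a b hab => by_contra fun hne => ?_
  have := hM (a - b) (sub_ne_zero.2 hne)
  rw [mulVec_sub, hab, sub_self, dotProduct_zero] at this
  exact this.false

theorem mulVec_eq_smul_mulVec_of_nonsing_inv_mul {P B : Matrix n n ℝ} (hP : IsUnit P)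
    {x : n → ℝ} {c : ℝ} (h : (P⁻¹ * B) *ᵥ x = c • x) : B *ᵥ x = c • (P *ᵥ x) := by
  have := congrArg (P *ᵥ ·) h
  simpa [mulVec_mulVec, ← Matrix.mul_assoc, mul_nonsing_inv _ ((isUnit_iff_isUnit_det P).1 hP),
    mulVec_smul] using this

omit [DecidableEq n] in
theorem dotProduct_self_pos {v : n → ℝ} (hv : v ≠ 0) : 0 < v ⬝ᵥ v := by
  simpa using dotProduct_self_star_pos_iff.2 hv

omit [DecidableEq n] in
theorem dotProduct_mulVec_pos_of_posDef_add_transpose {A : Matrix n n ℝ} (hA : (A + Aᵀ).PosDef)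
    {x : n → ℝ} (hx : x ≠ 0) : 0 < x ⬝ᵥ (A *ᵥ x) := by
  have := hA.dotProduct_mulVec_pos hx
  rw [star_trivial, add_mulVec, dotProduct_add, dotProduct_transpose_mulVec] at this
  linarith

omit [DecidableEq n] in
theorem add_dotProduct_add_sub_sub_dotProduct_sub (a b : n → ℝ) :
    (a + b) ⬝ᵥ (a + b) - (a - b) ⬝ᵥ (a - b) = 4 * (a ⬝ᵥ b) := by
  simp only [add_dotProduct, dotProduct_add, sub_dotProduct, dotProduct_sub, dotProduct_comm b a]
  ring

end Matrix

section AlternatingSplitting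

variable {n : Type*} [Fintype n] [DecidableEq n] {A C : Matrix n n ℝ} {α γ : ℝ}

noncomputable def altSplittingPrecond (A C : Matrix n n ℝ) (α γ : ℝ) : Matrix n n ℝ :=
  (1 / (2 * α)) • ((A + α • 1) * (α • 1 + γ • C))

theorem add_smul_one_mul_sub_sub_smul_one_mul (A C : Matrix n n ℝ) (α γ : ℝ) :
    (A + α • 1) * (α • 1 + γ • C) - (α • 1 - A) * (α • 1 - γ • C) = (2 * α) • (A + γ • C) := by
  simp only [mul_add, add_mul, mul_sub, sub_mul, smul_mul_assoc, mul_smul_comm,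
    one_mul, mul_one]
  module

theorem dotProduct_smul_one_mulVec (α : ℝ) (z : n → ℝ) :
    z ⬝ᵥ ((α • 1 : Matrix n n ℝ) *ᵥ z) = α * (z ⬝ᵥ z) := by
  rw [smul_mulVec, one_mulVec, dotProduct_smul, smul_eq_mul]

theorem isUnit_add_smul_one (hA : ∀ z ≠ 0, 0 < z ⬝ᵥ (A *ᵥ z)) (hα : 0 ≤ α) :
    IsUnit (A + α • 1) := isUnit_of_dotProduct_mulVec_pos fun z hz => by
  rw [add_mulVec, dotProduct_add, dotProduct_smul_one_mulVec]
  nlinarith [hA z hz, dotProduct_self_pos hz]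

theorem isUnit_smul_one_add_smul (hC : ∀ z, 0 ≤ z ⬝ᵥ (C *ᵥ z)) (hα : 0 < α) (hγ : 0 ≤ γ) :
    IsUnit (α • 1 + γ • C) := isUnit_of_dotProduct_mulVec_pos fun z hz => by
  rw [add_mulVec, dotProduct_add, dotProduct_smul_one_mulVec, smul_mulVec, dotProduct_smul,
    smul_eq_mul]
  nlinarith [hC z, dotProduct_self_pos hz]

theorem isUnit_altSplittingPrecond (hA : ∀ z ≠ 0, 0 < z ⬝ᵥ (A *ᵥ z))
    (hC : ∀ z, 0 ≤ z ⬝ᵥ (C *ᵥ z)) (hα : 0 < α) (hγ : 0 ≤ γ) :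
    IsUnit (altSplittingPrecond A C α γ) := by
  rw [altSplittingPrecond, Algebra.smul_def]
  exact ((one_div_ne_zero (by positivity)).isUnit.map _).mul
    ((isUnit_add_smul_one hA hα.le).mul (isUnit_smul_one_add_smul hC hα hγ))

theorem sq_lt_one_of_cayley (hA : ∀ z ≠ 0, 0 < z ⬝ᵥ (A *ᵥ z)) (hα : 0 < α) {u w : n → ℝ}
    (huw : u ⬝ᵥ u ≤ w ⬝ᵥ w) (hw : w ≠ 0) {ν : ℝ}
    (h : (α • 1 - A) *ᵥ u = ν • ((A + α • 1) *ᵥ w)) : ν ^ 2 < 1 := by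
  have hunit := isUnit_add_smul_one hA hα.le
  obtain ⟨z, rfl⟩ := mulVec_surjective_iff_isUnit.2 hunit u
  have hcomm : (A + α • 1) * (α • 1 - A) = (α • 1 - A) * (A + α • 1) := by
    simp only [mul_add, add_mul, mul_sub, sub_mul, smul_mul_assoc, mul_smul_comm, one_mul, mul_one]
    module
  have hz : (α • 1 - A) *ᵥ z = ν • w := mulVec_injective_iff_isUnit.2 hunit <| by
    rw [mulVec_mulVec, hcomm, ← mulVec_mulVec, h, mulVec_smul]
  have hquad : ((A + α • 1) *ᵥ z) ⬝ᵥ ((A + α • 1) *ᵥ z) - (ν • w) ⬝ᵥ (ν • w)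
      = 4 * α * (z ⬝ᵥ (A *ᵥ z)) := by
    have hplus : (A + α • 1) *ᵥ z = α • z + A *ᵥ z := by
      rw [add_mulVec, smul_mulVec, one_mulVec, add_comm]
    have hminus : (α • 1 - A) *ᵥ z = α • z - A *ᵥ z := by
      rw [sub_mulVec, smul_mulVec, one_mulVec]
    rw [← hz, hplus, hminus, add_dotProduct_add_sub_sub_dotProduct_sub, smul_dotProduct,
      smul_eq_mul, mul_assoc]
  rw [smul_dotProduct, dotProduct_smul, smul_eq_mul, smul_eq_mul, ← mul_assoc, ← sq] at hquad
  rcases eq_or_ne z 0 with rfl | hz0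
  · obtain rfl : ν = 0 := by simpa [hw, eq_comm] using hz
    norm_num
  · nlinarith [hA z hz0, dotProduct_self_pos hw]

theorem mem_Ioo_of_mulVec_eq_smul_altSplittingPrecond_mulVec (hA : ∀ z ≠ 0, 0 < z ⬝ᵥ (A *ᵥ z))
    (hC : ∀ z, 0 ≤ z ⬝ᵥ (C *ᵥ z)) (hα : 0 < α) (hγ : 0 ≤ γ) {x : n → ℝ} (hx : x ≠ 0) {lam : ℝ}
    (h : (A + γ • C) *ᵥ x = lam • (altSplittingPrecond A C α γ *ᵥ x)) :
    lam ∈ Set.Ioo 0 2 := by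
  set w := (α • 1 + γ • C) *ᵥ x
  set u := (α • 1 - γ • C) *ᵥ x
  have hwu : w ⬝ᵥ w - u ⬝ᵥ u = 4 * α * γ * (x ⬝ᵥ (C *ᵥ x)) := by
    simp only [w, u, add_mulVec, sub_mulVec, smul_mulVec, one_mulVec,
      add_dotProduct_add_sub_sub_dotProduct_sub, dotProduct_smul, smul_dotProduct, smul_eq_mul]
    ring
  have hw : w ≠ 0 := by
    intro hw0
    have : x ⬝ᵥ w = α * (x ⬝ᵥ x) + γ * (x ⬝ᵥ (C *ᵥ x)) := by
      simp only [w, add_mulVec, dotProduct_add, smul_mulVec, one_mulVec, dotProduct_smul,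
        smul_eq_mul]
    rw [hw0, dotProduct_zero] at this
    nlinarith [hC x, dotProduct_self_pos hx]
  have hcayley : (α • 1 - A) *ᵥ u = (1 - lam) • ((A + α • 1) *ᵥ w) := by
    have hPw : (2 * α) • (altSplittingPrecond A C α γ *ᵥ x) = (A + α • 1) *ᵥ w := by
      rw [altSplittingPrecond, smul_mulVec, smul_smul, mul_one_div_cancel (by positivity),
        one_smul, ← mulVec_mulVec]
    have hsplit := congrArg (· *ᵥ x) (add_smul_one_mul_sub_sub_smul_one_mul A C α γ)
    rw [sub_mulVec, ← mulVec_mulVec, ← mulVec_mulVec, smul_mulVec, h, smul_comm, hPw] at hsplit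
    rw [sub_smul, one_smul, ← hsplit, sub_sub_cancel]
  have huw : u ⬝ᵥ u ≤ w ⬝ᵥ w := by nlinarith [mul_nonneg (mul_nonneg hα.le hγ) (hC x)]
  have hν := sq_lt_one_of_cayley hA hα huw hw hcayley
  constructor <;> nlinarith

theorem l2_opNorm_altSplittingPrecond_le (hα : 0 < α) (hγ : 0 ≤ γ) :
    ‖altSplittingPrecond A C α γ‖ ≤ (‖A‖ + α) * (α + γ * ‖C‖) / (2 * α) := by
  have hone : ‖α • (1 : Matrix n n ℝ)‖ ≤ α := by
    rw [norm_smul, Real.norm_of_nonneg hα.le]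
    exact mul_le_of_le_one_right hα.le l2_opNorm_one_le
  have hA : ‖A + α • 1‖ ≤ ‖A‖ + α := (norm_add_le _ _).trans (add_le_add_right hone _)
  have hC : ‖α • 1 + γ • C‖ ≤ α + γ * ‖C‖ := (norm_add_le _ _).trans <|
    add_le_add hone (by rw [norm_smul, Real.norm_of_nonneg hγ])
  rw [altSplittingPrecond, norm_smul, Real.norm_of_nonneg (by positivity), one_div_mul_eq_div]
  gcongr
  exact (l2_opNorm_mul _ _).trans (mul_le_mul hA hC (norm_nonneg _) (by positivity))

theorem dotProduct_mulVec_le_mul_l2_opNorm_of_mulVec_eq_smul (hC : ∀ z, 0 ≤ z ⬝ᵥ (C *ᵥ z))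
    (hγ : 0 ≤ γ) {P : Matrix n n ℝ} {x : n → ℝ} {lam : ℝ} (hlam : 0 ≤ lam)
    (h : (A + γ • C) *ᵥ x = lam • (P *ᵥ x)) : x ⬝ᵥ (A *ᵥ x) ≤ lam * ‖P‖ * (x ⬝ᵥ x) := by
  have hquad := congrArg (x ⬝ᵥ ·) h
  simp only [add_mulVec, smul_mulVec, dotProduct_add, dotProduct_smul, smul_eq_mul] at hquad
  have hP := dotProduct_mulVec_le_l2_opNorm_mul P x
  nlinarith [mul_nonneg hγ (hC x), mul_le_mul_of_nonneg_left hP hlam]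

end AlternatingSplitting

theorem stmt_10_general {n k : ℕ} (A : Matrix (Fin n) (Fin n) ℝ)
    (U : Matrix (Fin n) (Fin k) ℝ) (hA : (A + Aᵀ).PosDef)
    (hnA : spec2Norm A = 1) (hnU : spec2Norm U = 1)
    (α γ : ℝ) (hα : 0 < α) (hγ : 0 < γ)
    (Pα : Matrix (Fin n) (Fin n) ℝ)
    (hP : Pα = (1 / (2 * α)) • ((A + α • 1) * (α • 1 + γ • (U * Uᵀ))))
    (lam : ℝ) (x : Fin n → ℝ) (hx : x ⬝ᵥ x = 1)
    (heig : (Pα⁻¹ * (A + γ • (U * Uᵀ))) *ᵥ x = lam • x) :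
    α * (⨅ i, hA.1.eigenvalues i) / ((1 + α) * (α + γ)) ≤ lam ∧ lam < 2 := by
  replace hP : Pα = altSplittingPrecond A (U * Uᵀ) α γ := hP
  have hApos : ∀ z ≠ 0, 0 < z ⬝ᵥ (A *ᵥ z) := fun _ =>
    dotProduct_mulVec_pos_of_posDef_add_transpose hA
  have hC : ∀ z, 0 ≤ z ⬝ᵥ ((U * Uᵀ) *ᵥ z) := fun z => by
    simpa using (posSemidef_self_mul_conjTranspose U).dotProduct_mulVec_nonneg z
  have hx0 : x ≠ 0 := by rintro rfl; simp at hx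
  have heig' := mulVec_eq_smul_mulVec_of_nonsing_inv_mul
    (hP ▸ isUnit_altSplittingPrecond hApos hC hα hγ.le) heig
  obtain ⟨hlam0, hlam2⟩ :=
    mem_Ioo_of_mulVec_eq_smul_altSplittingPrecond_mulVec hApos hC hα hγ.le hx0 (hP ▸ heig')
  refine ⟨?_, hlam2⟩
  have hray := hA.1.iInf_eigenvalues_mul_dotProduct_self_le x
  rw [hx, mul_one, add_mulVec, dotProduct_add, dotProduct_transpose_mulVec, ← two_mul] at hray
  have hAx := dotProduct_mulVec_le_mul_l2_opNorm_of_mulVec_eq_smul hC hγ.le hlam0.le heig'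
  rw [hx, mul_one] at hAx
  have hnorm : ‖Pα‖ * (2 * α) ≤ (1 + α) * (α + γ) := by
    have := hP ▸ l2_opNorm_altSplittingPrecond_le (A := A) (C := U * Uᵀ) hα hγ.le
    rwa [l2_opNorm_mul_transpose_self, show ‖A‖ = 1 from hnA, show ‖U‖ = 1 from hnU, mul_one,
      mul_one, le_div_iff₀ (by positivity)] at this
  rw [div_le_iff₀ (by positivity)]
  calc α * (⨅ i, hA.1.eigenvalues i) ≤ α * (2 * (lam * ‖Pα‖)) := by gcongr; linarith
    _ = lam * (‖Pα‖ * (2 * α)) := by ring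
    _ ≤ lam * ((1 + α) * (α + γ)) := by gcongr

theorem stmt_10 {n k : ℕ} [NeZero n] (A : Matrix (Fin n) (Fin n) ℝ)
    (U : Matrix (Fin n) (Fin k) ℝ) (hA : (A + Aᵀ).PosDef)
    (hnA : spec2Norm A = 1) (hnU : spec2Norm U = 1)
    (α γ : ℝ) (hα : 0 < α) (hγ : 0 < γ)
    (Pα : Matrix (Fin n) (Fin n) ℝ)
    (hP : Pα = (1 / (2 * α)) • ((A + α • 1) * (α • 1 + γ • (U * Uᵀ))))
    (lam : ℝ) (x : Fin n → ℝ) (hx : x ⬝ᵥ x = 1)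
    (heig : (Pα⁻¹ * (A + γ • (U * Uᵀ))) *ᵥ x = lam • x) :
    α * (⨅ i, hA.1.eigenvalues i) / ((1 + α) * (α + γ)) ≤ lam ∧ lam < 2 :=
  stmt_10_general A U hA hnA hnU α γ hα hγ Pα hP lam x hx heig
end

section
/- Under the assumptions ‖A‖₂ = ‖U‖₂ = 1 and A + Aᵀ positive definite, if (η, x) is an eigenpair of A with x ∈ Ker(Uᵀ), then x is an eigenvector of P_α^{-1}(A + γUUᵀ) with eigenvalue λ = 2η/(η + α), independent of γ. -/
/-! Since `Uᵀ x = 0`, the vector `x` is an eigenvector of `A + γ UUᵀ` (eigenvalue `η`) and of both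
factors of `Pα` (eigenvalues `η + α` and `α`), so `Pα x = ((η + α) / 2) x`. What remains is that
`Pα` is invertible: `α I + γ UUᵀ` is positive definite, and `A + α I` is nonsingular because a
positive definite symmetric part `A + Aᵀ` makes every real eigenvalue of `A` positive (which also
gives `η + α ≠ 0`). -/

open Matrix

namespace Matrix

variable {ι : Type*} [Fintype ι]

theorem inv_mulVec_eq_inv_smul {K : Type*} [Field K] [DecidableEq ι] {M : Matrix ι ι K}
    (hM : IsUnit M) {c : K} {v : ι → K} (hv : M *ᵥ v = c • v) : M⁻¹ *ᵥ v = c⁻¹ • v := by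
  have hv' : v = c • (M⁻¹ *ᵥ v) := by
    rw [← mulVec_smul, ← hv, mulVec_mulVec, nonsing_inv_mul _ ((isUnit_iff_isUnit_det M).mp hM),
      one_mulVec]
  rcases eq_or_ne c 0 with rfl | hc
  · rw [zero_smul] at hv'
    rw [hv', mulVec_zero, smul_zero]
  · rw [eq_inv_smul_iff₀ hc, ← hv']

theorem dotProduct_add_transpose_mulVec (A : Matrix ι ι ℝ) (v : ι → ℝ) :
    v ⬝ᵥ ((A + Aᵀ) *ᵥ v) = 2 * (v ⬝ᵥ (A *ᵥ v)) := by
  rw [add_mulVec, dotProduct_add, dotProduct_mulVec v Aᵀ, vecMul_transpose, dotProduct_comm]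
  ring

theorem pos_of_mulVec_eq_smul_of_posDef_add_transpose {A : Matrix ι ι ℝ} (hA : (A + Aᵀ).PosDef)
    {η : ℝ} {x : ι → ℝ} (hx : x ≠ 0) (hAx : A *ᵥ x = η • x) : 0 < η := by
  have hform := hA.dotProduct_mulVec_pos hx
  rw [star_trivial, dotProduct_add_transpose_mulVec, hAx, dotProduct_smul, smul_eq_mul] at hform
  have hxx : 0 < x ⬝ᵥ x := by
    simpa using dotProduct_self_star_pos_iff.mpr hx
  nlinarith

theorem isUnit_add_smul_one_of_posDef_add_transpose [DecidableEq ι] {A : Matrix ι ι ℝ}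
    (hA : (A + Aᵀ).PosDef) {α : ℝ} (hα : 0 < α) : IsUnit (A + α • 1) := by
  rw [isUnit_iff_isUnit_det, isUnit_iff_ne_zero, Ne, ← exists_mulVec_eq_zero_iff]
  rintro ⟨v, hv, hAv⟩
  have hAv' : A *ᵥ v = (-α) • v := by
    rw [add_mulVec, smul_mulVec, one_mulVec] at hAv
    rw [neg_smul, eq_neg_iff_add_eq_zero, hAv]
  linarith [pos_of_mulVec_eq_smul_of_posDef_add_transpose hA hv hAv']

theorem posDef_smul_one_add_smul_mul_transpose [DecidableEq ι] {κ : Type*} [Fintype κ]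
    (U : Matrix ι κ ℝ) {α γ : ℝ} (hα : 0 < α) (hγ : 0 ≤ γ) :
    (α • 1 + γ • (U * Uᵀ)).PosDef := by
  have hUU : (U * Uᵀ).PosSemidef := by
    simpa using posSemidef_self_mul_conjTranspose U
  exact (PosDef.one.smul hα).add_posSemidef (hUU.smul hγ)

end Matrix

theorem stmt_11_general {n k : ℕ} (A : Matrix (Fin n) (Fin n) ℝ)
    (U : Matrix (Fin n) (Fin k) ℝ) (hA : (A + Aᵀ).PosDef)
    (α γ : ℝ) (hα : 0 < α) (hγ : 0 < γ)
    (Pα : Matrix (Fin n) (Fin n) ℝ)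
    (hP : Pα = (1 / (2 * α)) • ((A + α • 1) * (α • 1 + γ • (U * Uᵀ))))
    (η : ℝ) (x : Fin n → ℝ) (hx : x ≠ 0) (heig : A *ᵥ x = η • x)
    (hker : Uᵀ *ᵥ x = 0) :
    (Pα⁻¹ * (A + γ • (U * Uᵀ))) *ᵥ x = (2 * η / (η + α)) • x := by
  have hUUx : (U * Uᵀ) *ᵥ x = 0 := by rw [← mulVec_mulVec, hker, mulVec_zero]
  have hη : 0 < η := pos_of_mulVec_eq_smul_of_posDef_add_transpose hA hx heig
  have hBx : (A + γ • (U * Uᵀ)) *ᵥ x = η • x := by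
    rw [add_mulVec, smul_mulVec, hUUx, smul_zero, add_zero, heig]
  have hshift : (A + α • 1) *ᵥ x = (η + α) • x := by
    rw [add_mulVec, heig, smul_mulVec, one_mulVec, add_smul]
  have hfactor : (α • 1 + γ • (U * Uᵀ)) *ᵥ x = α • x := by
    rw [add_mulVec, smul_mulVec, smul_mulVec, hUUx, one_mulVec, smul_zero, add_zero]
  have hPx : Pα *ᵥ x = ((η + α) / 2) • x := by
    rw [hP, smul_mulVec, ← mulVec_mulVec, hfactor, mulVec_smul, hshift, smul_smul, smul_smul]
    congr 1
    field_simp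
  have hPunit : IsUnit Pα := by
    have hc : 1 / (2 * α) ≠ 0 := by positivity
    rw [hP]
    exact ((isUnit_add_smul_one_of_posDef_add_transpose hA hα).mul
      (posDef_smul_one_add_smul_mul_transpose U hα hγ.le).isUnit).smul (Units.mk0 _ hc)
  rw [← mulVec_mulVec, hBx, mulVec_smul, inv_mulVec_eq_inv_smul hPunit hPx, smul_smul]
  congr 1
  field_simp

theorem stmt_11 {n k : ℕ} (A : Matrix (Fin n) (Fin n) ℝ)
    (U : Matrix (Fin n) (Fin k) ℝ) (hA : (A + Aᵀ).PosDef)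
    (hnA : spec2Norm A = 1) (hnU : spec2Norm U = 1)
    (α γ : ℝ) (hα : 0 < α) (hγ : 0 < γ)
    (Pα : Matrix (Fin n) (Fin n) ℝ)
    (hP : Pα = (1 / (2 * α)) • ((A + α • 1) * (α • 1 + γ • (U * Uᵀ))))
    (η : ℝ) (x : Fin n → ℝ) (hx : x ≠ 0) (heig : A *ᵥ x = η • x)
    (hker : Uᵀ *ᵥ x = 0) :
    (Pα⁻¹ * (A + γ • (U * Uᵀ))) *ᵥ x = (2 * η / (η + α)) • x :=
  stmt_11_general A U hA α γ hα hγ Pα hP η x hx heig hker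
end
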